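/- arXiv:0704.0685 — 3 statements merged into one kernel-verified Lean document; each statement's English description precedes it below -/
import Mathlib

section
/- Fix s ≥ 1, P_s = {a_1,…,a_s, c | a_i < c}. Let M((m,p),(n,q)) be as above. Then for p ≤ m ≤ n, p ≤ q ≤ n, p ≥ 1: M((m,p),(n,q)) = Σ_{k=0}^{n−m} M((m−p,0),(n−p−k,q−p)) · s^k · C(p+k−1, p−1). -/
/-- The alphabet `P_s = {a_1, …, a_s, c}` with `a_i < c`: `some i` is `a_i`, `none` is `c`. -/
abbrev Letter (s : ℕ) := Option (Fin s)

/-- The generalized subword order on words over `P_s`. -/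
def WLE {s : ℕ} (u w : List (Letter s)) : Prop :=
  ∃ w', w'.Sublist w ∧ List.Forall₂ (fun x y => x = y ∨ y = none) u w'

/-- `M((m,p),(n,q))`: the number of words of length `n` with exactly `q` letters `c`
lying above `a_1^{m−p} c^p` in the generalized subword order. -/
noncomputable def M (s : ℕ) (hs : 1 ≤ s) (m p n q : ℕ) : ℕ :=
  {w : List (Letter s) | w.length = n ∧ w.count (none : Letter s) = q ∧
    WLE (List.replicate (m - p) (some (⟨0, hs⟩ : Fin s)) ++
      List.replicate p (none : Letter s)) w}.ncard


/-!
Cutting a word at its last letter `c` shows that it lies above `u c` exactly when the part before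
that letter lies above `u`, the part after it being an arbitrary word in `a_1, …, a_s`. For the
generating functions `F_{u,q}(X) = ∑ₙ M_u(n, q) Xⁿ` this reads `F_{u c, q+1} = X F_{u,q} / (1 - sX)`
(with `1 / (1 - sX)` written `rescale s (mk 1)`), so appending `c^p` multiplies by
`(X / (1 - sX))^p`, whose coefficient of `X^(p+k)` is `s^k C(p+k-1, p-1)`.
-/

namespace List

variable {α : Type*}

theorem exists_eq_append_cons_notMem {a : α} {l : List α} (h : a ∈ l) :
    ∃ l₁ l₂, l = l₁ ++ a :: l₂ ∧ a ∉ l₂ := by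
  induction l using List.reverseRecOn with
  | nil => cases h
  | append_singleton l x ih =>
    by_cases hx : x = a
    · exact ⟨l, [], by rw [hx], not_mem_nil⟩
    · obtain ⟨l₁, l₂, rfl, hl₂⟩ := ih (by simpa [Ne.symm hx] using h)
      exact ⟨l₁, l₂ ++ [x], by simp, by simp [hl₂, Ne.symm hx]⟩

theorem sublist_of_concat_sublist_append_cons {a : α} {l w v : List α} (hv : a ∉ v)
    (h : l ++ [a] <+ w ++ a :: v) : l <+ w := by
  rw [← reverse_sublist] at h
  simp only [reverse_append, reverse_cons, reverse_nil, nil_append, singleton_append,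
    append_assoc] at h
  obtain ⟨l₁, l₂, hl, hl₁, hl₂⟩ := sublist_append_iff.mp h
  cases l₁ with
  | nil =>
    rw [nil_append] at hl
    rwa [← hl, cons_sublist_cons, reverse_sublist] at hl₂
  | cons b l₁ =>
    obtain ⟨rfl, -⟩ := cons_eq_cons.mp hl
    exact absurd (mem_reverse.mp (hl₁.subset mem_cons_self)) hv

theorem append_cons_inj_of_notMem_right {a : α} {x₁ x₂ z₁ z₂ : List α} (h₁ : a ∉ z₁)
    (h₂ : a ∉ z₂) (h : x₁ ++ a :: z₁ = x₂ ++ a :: z₂) : x₁ = x₂ ∧ z₁ = z₂ := by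
  rcases append_eq_append_iff.mp h with ⟨c, rfl, h⟩ | ⟨c, rfl, h⟩ <;> cases c <;> simp_all

theorem exists_eq_map_some_of_none_notMem {l : List (Option α)} (h : none ∉ l) :
    ∃ v : List α, l = v.map some := by
  induction l with
  | nil => exact ⟨[], rfl⟩
  | cons x l ih =>
    obtain ⟨v, rfl⟩ := ih fun h' => h (mem_cons_of_mem x h')
    obtain ⟨a, rfl⟩ := Option.ne_none_iff_exists'.mp fun hx => h (hx ▸ mem_cons_self)
    exact ⟨a :: v, rfl⟩

end List

section WLE

variable {s : ℕ}

theorem WLE.length_le {u w : List (Letter s)} (h : WLE u w) : u.length ≤ w.length := by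
  obtain ⟨w', hsub, hrel⟩ := h
  exact hrel.length_eq ▸ hsub.length_le

theorem wle_concat_none_iff {u w v : List (Letter s)} (hv : none ∉ v) :
    WLE (u ++ [none]) (w ++ none :: v) ↔ WLE u w := by
  constructor
  · rintro ⟨w', hsub, hrel⟩
    rw [← List.forall₂_reverse_iff, List.reverse_concat', List.forall₂_cons_left_iff] at hrel
    obtain ⟨y, t, hy, ht, hw'⟩ := hrel
    obtain rfl : y = none := hy.elim Eq.symm id
    rw [List.reverse_eq_cons_iff.mp hw'] at hsub
    exact ⟨t.reverse, List.sublist_of_concat_sublist_append_cons hv hsub,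
      List.forall₂_reverse_iff.mp (by rwa [List.reverse_reverse])⟩
  · rintro ⟨w', hsub, hrel⟩
    exact ⟨w' ++ [none], hsub.append (List.singleton_sublist.mpr List.mem_cons_self),
      List.rel_append hrel (List.Forall₂.cons (Or.inl rfl) List.Forall₂.nil)⟩

end WLE

section Words

variable (α : Type*) [Fintype α]

def wordsOfLength (n : ℕ) : Finset (List α) :=
  (Finset.univ : Finset (List.Vector α n)).map ⟨List.Vector.toList, List.Vector.toList_injective⟩

variable {α}

@[simp]
theorem mem_wordsOfLength {n : ℕ} {l : List α} : l ∈ wordsOfLength α n ↔ l.length = n := by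
  simp only [wordsOfLength, Finset.mem_map, Finset.mem_univ, true_and, Function.Embedding.coeFn_mk]
  exact ⟨fun ⟨v, hv⟩ => hv ▸ v.toList_length, fun h => ⟨⟨l, h⟩, rfl⟩⟩

theorem card_wordsOfLength (n : ℕ) : (wordsOfLength α n).card = Fintype.card α ^ n := by
  rw [wordsOfLength, Finset.card_map, Finset.card_univ, card_vector]

end Words

section Above

open Finset

variable {s : ℕ}

open scoped Classical in
noncomputable def aboveWords (u : List (Letter s)) (n q : ℕ) : Finset (List (Letter s)) :=
  (wordsOfLength (Letter s) n).filter fun w => w.count none = q ∧ WLE u w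

@[simp]
theorem mem_aboveWords {u w : List (Letter s)} {n q : ℕ} :
    w ∈ aboveWords u n q ↔ w.length = n ∧ w.count none = q ∧ WLE u w := by
  simp [aboveWords]

theorem M_eq_card_aboveWords (hs : 1 ≤ s) (m p n q : ℕ) :
    M s hs m p n q =
      #(aboveWords (List.replicate (m - p) (some ⟨0, hs⟩) ++ List.replicate p none) n q) := by
  rw [M, ← Set.ncard_coe_finset]
  congr 1
  ext w
  simp

theorem aboveWords_eq_empty_of_lt_length {u : List (Letter s)} {n q : ℕ} (h : n < u.length) :
    aboveWords u n q = ∅ :=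
  eq_empty_of_forall_notMem fun w hw => by
    obtain ⟨rfl, -, hwle⟩ := mem_aboveWords.mp hw
    exact absurd hwle.length_le (not_le.mpr h)

theorem card_aboveWords_concat_none (u : List (Letter s)) (n q : ℕ) :
    #(aboveWords (u ++ [none]) (n + 1) (q + 1)) =
      ∑ x ∈ antidiagonal n, #(aboveWords u x.1 q) * s ^ x.2 := by
  have hv {v : List (Fin s)} : (none : Letter s) ∉ v.map some := by simp
  have hcard (j : ℕ) : s ^ j = #(wordsOfLength (Fin s) j) := by
    rw [card_wordsOfLength, Fintype.card_fin]
  simp only [hcard, ← card_product, ← card_sigma]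
  symm
  refine card_bij (fun x _ => x.2.1 ++ none :: x.2.2.map some) ?_ ?_ ?_
  · rintro ⟨⟨i, j⟩, w, v⟩ hx
    simp only [mem_sigma, mem_product, HasAntidiagonal.mem_antidiagonal, mem_aboveWords,
      mem_wordsOfLength] at hx
    obtain ⟨rfl, ⟨rfl, rfl, hwle⟩, rfl⟩ := hx
    simp [wle_concat_none_iff hv, hwle, List.count_eq_zero_of_not_mem hv, add_assoc]
  · rintro ⟨⟨i, j⟩, w, v⟩ hx ⟨⟨i', j'⟩, w', v'⟩ hx' h
    simp only [mem_sigma, mem_product, HasAntidiagonal.mem_antidiagonal, mem_aboveWords,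
      mem_wordsOfLength] at hx hx'
    obtain ⟨rfl, hvv'⟩ := List.append_cons_inj_of_notMem_right hv hv h
    obtain rfl := List.map_injective_iff.mpr (Option.some_injective _) hvv'
    obtain ⟨-, ⟨rfl, -⟩, rfl⟩ := hx
    obtain ⟨-, ⟨rfl, -⟩, rfl⟩ := hx'
    rfl
  · intro W hW
    obtain ⟨hlen, hcount, hwle⟩ := mem_aboveWords.mp hW
    obtain ⟨w, t, rfl, ht⟩ := List.exists_eq_append_cons_notMem
      (List.count_pos_iff.mp (hcount ▸ q.succ_pos : 0 < W.count none))
    obtain ⟨t, rfl⟩ := List.exists_eq_map_some_of_none_notMem ht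
    refine ⟨⟨(w.length, t.length), w, t⟩, ?_, rfl⟩
    simp only [mem_sigma, mem_product, HasAntidiagonal.mem_antidiagonal, mem_aboveWords,
      mem_wordsOfLength, true_and, and_true]
    simp [List.count_eq_zero_of_not_mem ht] at hlen hcount
    exact ⟨by omega, hcount, (wle_concat_none_iff ht).mp hwle⟩

end Above

section Series

open PowerSeries Finset

variable {s : ℕ}

noncomputable def aboveSeries (u : List (Letter s)) (q : ℕ) : ℕ⟦X⟧ :=
  mk fun n => #(aboveWords u n q)

theorem aboveSeries_concat_none (u : List (Letter s)) (q : ℕ) :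
    aboveSeries (u ++ [none]) (q + 1) = X * aboveSeries u q * rescale s (mk 1) := by
  ext n
  rw [mul_assoc]
  cases n with
  | zero => simp [aboveSeries, aboveWords_eq_empty_of_lt_length]
  | succ n =>
    rw [coeff_succ_X_mul, coeff_mul, aboveSeries, coeff_mk, card_aboveWords_concat_none]
    simp [aboveSeries, coeff_rescale]

theorem aboveSeries_append_replicate_none (u : List (Letter s)) (p q : ℕ) :
    aboveSeries (u ++ List.replicate p none) (q + p) =
      (X * rescale s (mk 1)) ^ p * aboveSeries u q := by
  induction p with
  | zero => simp
  | succ p ih =>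
    rw [List.replicate_succ', ← List.append_assoc, ← add_assoc, aboveSeries_concat_none, ih]
    ring

theorem coeff_rescale_mk_one_pow_succ (a d k : ℕ) :
    coeff k (rescale a (mk 1) ^ (d + 1)) = a ^ k * (d + k).choose d := by
  rw [← map_pow, coeff_rescale]
  congr 1
  apply Nat.cast_injective (R := ℤ)
  have hmap : (mk 1 : ℤ⟦X⟧) = map (Nat.castRingHom ℤ) (mk 1) := by ext; simp
  have h := congrArg (coeff k) (mk_one_pow_eq_mk_choose_add ℤ d)
  rwa [hmap, ← map_pow, coeff_map, coeff_mk] at h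

theorem card_aboveWords_append_replicate_none (u : List (Letter s)) {p n : ℕ} (q : ℕ)
    (hp : 1 ≤ p) (hpn : p ≤ n) :
    #(aboveWords (u ++ List.replicate p none) n (q + p)) =
      ∑ k ∈ range (n - (u.length + p) + 1),
        #(aboveWords u (n - p - k) q) * s ^ k * (p + k - 1).choose (p - 1) := by
  obtain ⟨d, rfl⟩ : ∃ d, p = d + 1 := ⟨p - 1, by omega⟩
  have h := congrArg (coeff n) (aboveSeries_append_replicate_none u (d + 1) q)
  rw [aboveSeries, coeff_mk] at h
  rw [h, mul_pow, mul_assoc, coeff_X_pow_mul', if_pos hpn, coeff_mul,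
    Nat.sum_antidiagonal_eq_sum_range_succ (fun k i => coeff k _ * coeff i _)]
  have hrange : n - (u.length + (d + 1)) + 1 ≤ (n - (d + 1)).succ := by omega
  rw [← sum_subset (range_subset_range.mpr hrange) fun k hk hk' => ?_]
  · refine sum_congr rfl fun k _ => ?_
    rw [coeff_rescale_mk_one_pow_succ, aboveSeries, coeff_mk, Nat.add_sub_cancel,
      add_right_comm, Nat.add_sub_cancel]
    ring
  · rw [mem_range] at hk hk'
    rw [aboveSeries, coeff_mk, aboveWords_eq_empty_of_lt_length (by omega), card_empty, mul_zero]

end Series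

theorem M_iterated_recurrence_general (s : ℕ) (hs : 1 ≤ s) (m p n q : ℕ)
    (hp : 1 ≤ p) (hpm : p ≤ m) (hmn : m ≤ n) (hpq : p ≤ q) :
    M s hs m p n q = ∑ k ∈ Finset.range (n - m + 1),
      M s hs (m - p) 0 (n - p - k) (q - p) * s ^ k * (p + k - 1).choose (p - 1) := by
  obtain ⟨q, rfl⟩ : ∃ q', q = q' + p := ⟨q - p, by omega⟩
  rw [M_eq_card_aboveWords, card_aboveWords_append_replicate_none _ q hp (by omega),
    List.length_replicate, Nat.sub_add_cancel hpm, Nat.add_sub_cancel]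
  refine Finset.sum_congr rfl fun k _ => ?_
  rw [M_eq_card_aboveWords, Nat.sub_zero, List.replicate_zero, List.append_nil]

/-- For `1 ≤ p ≤ m ≤ n`, `p ≤ q ≤ n`:
`M((m,p),(n,q)) = Σ_{k=0}^{n−m} M((m−p,0),(n−p−k,q−p)) · s^k · C(p+k−1, p−1)`. -/
theorem M_iterated_recurrence (s : ℕ) (hs : 1 ≤ s) (m p n q : ℕ)
    (hp : 1 ≤ p) (hpm : p ≤ m) (hmn : m ≤ n) (hpq : p ≤ q) (hqn : q ≤ n) :
    M s hs m p n q = ∑ k ∈ Finset.range (n - m + 1),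
      M s hs (m - p) 0 (n - p - k) (q - p) * s ^ k * (p + k - 1).choose (p - 1) :=
  M_iterated_recurrence_general s hs m p n q hp hpm hmn hpq
end

section
/- Fix s ≥ 1, P_s = {a_1,…,a_s, c | a_i < c}, with μ the Möbius function of P_s^*. For every n ≥ 1, μ(∅, c^n) = s^{n−1}(s − 1). -/
/-!
The values `μ(∅, v)` are determined by the recursion `∑_{z ≤ v} μ(∅, z) = [v = ∅]`, because a
proper subword has smaller weight (length plus number of `c`s); so it suffices to exhibit one
solution. The candidate is a product over the letters of a word of factors depending only on a
letter and its successor: `c` contributes `s` before another `c` and `s - 1` otherwise, `a_i`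
contributes `0` before another `a_i` and `-1` otherwise. The words below `x :: v` split as
`{y :: z | y ≤ x, z ≤ v} ⊔ {z ≤ v | z does not start with a letter ≤ x}`, and for each `z ≤ v`
the first factors of the words `y :: z` (`y ≤ x`), plus `1` if `z` lies in the second part, sum
to `0`. On `c^n` the product is `s^(n-1) (s - 1)`.
-/

theorem List.SublistForall₂.of_cons_left {α β : Type*} {R : α → β → Prop} {a : α}
    {l₁ : List α} {l₂ : List β} (h : SublistForall₂ R (a :: l₁) l₂) : SublistForall₂ R l₁ l₂ := by
  obtain ⟨l, hR, hl⟩ := sublistForall₂_iff.1 h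
  cases hR with
  | cons _ hR' => exact sublistForall₂_iff.2 ⟨_, hR', (sublist_cons_self _ _).trans hl⟩

theorem eq_of_forall_sum_lowerSet_eq {α M : Type*} [DecidableEq α] [AddCancelCommMonoid M]
    (D : α → Finset α) (m : α → ℕ) (self_mem : ∀ v, v ∈ D v) (lt_of_mem : ∀ v, ∀ z ∈ D v, z ≠ v → m z < m v)
    {F G : α → M} (h : ∀ v, ∑ z ∈ D v, F z = ∑ z ∈ D v, G z) : F = G := by
  funext v
  induction v using (InvImage.wf m wellFounded_lt).induction with
  | _ v ih =>
    have hv := h v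
    rw [← Finset.add_sum_erase _ _ (self_mem v), ← Finset.add_sum_erase _ _ (self_mem v),
      Finset.sum_congr rfl fun z hz => ih z (lt_of_mem v z (Finset.mem_of_mem_erase hz)
        (Finset.ne_of_mem_erase hz))] at hv
    exact add_right_cancel hv

namespace Letter

variable {s : ℕ}

def Below (y x : Letter s) : Prop := y = x ∨ x = none

instance : DecidableRel (Below (s := s)) := fun y x =>
  inferInstanceAs (Decidable (y = x ∨ x = none))

def weight : Letter s → ℕ
  | none => 2
  | some _ => 1

theorem one_le_weight (x : Letter s) : 1 ≤ weight x := by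
  cases x <;> simp [weight]

theorem Below.eq_or_weight_lt {x y : Letter s} (h : Below x y) : x = y ∨ weight x < weight y := by
  rcases h with rfl | rfl
  · exact .inl rfl
  · cases x
    · exact .inl rfl
    · exact .inr (by simp [weight])

def Iic (x : Letter s) : Finset (Letter s) := {y | Below y x}

@[simp] theorem mem_Iic {y x : Letter s} : y ∈ Iic x ↔ Below y x := by simp [Iic]

def mobiusCoeff : Letter s → Option (Letter s) → ℤ
  | none, next => if next = some none then s else s - 1
  | some a, next => if next = some (some a) then 0 else -1

theorem sum_mobiusCoeff_add (x : Letter s) (next : Option (Letter s)) :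
    ∑ y ∈ Iic x, mobiusCoeff y next + (if ∀ y ∈ next, ¬ Below y x then 1 else 0) = 0 := by
  rcases x with _ | a
  · have : Iic (none : Letter s) = Finset.univ := by ext; simp [Below]
    rw [this, Fintype.sum_option]
    rcases next with _ | _ | b
    · simp [mobiusCoeff, Below]
      ring
    · simp [mobiusCoeff, Below]
    · have h (a : Fin s) : (if b = a then (0 : ℤ) else -1) = (if b = a then 1 else 0) - 1 := by
        split_ifs <;> norm_num
      simp [mobiusCoeff, Below, h, Finset.sum_sub_distrib]
  · have : Iic (some a) = {some a} := by ext; simp [Below]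
    rw [this, Finset.sum_singleton]
    rcases next with _ | _ | b <;> simp [mobiusCoeff, Below]
    split_ifs <;> norm_num

end Letter

namespace WLE

variable {s : ℕ}

theorem iff_sublistForall₂ {u w : List (Letter s)} :
    WLE u w ↔ List.SublistForall₂ Letter.Below u w := by
  rw [List.sublistForall₂_iff]
  exact ⟨fun ⟨w', hw, hu⟩ => ⟨w', hu, hw⟩, fun ⟨w', hu, hw⟩ => ⟨w', hw, hu⟩⟩

theorem nil_left (w : List (Letter s)) : WLE [] w :=
  iff_sublistForall₂.2 .nil

theorem refl (w : List (Letter s)) : WLE w w :=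
  ⟨w, .refl w, List.forall₂_same.2 fun _ _ => .inl rfl⟩

def weight : List (Letter s) → ℕ
  | [] => 0
  | x :: w => Letter.weight x + weight w

theorem eq_or_weight_lt {u w : List (Letter s)} (h : List.SublistForall₂ Letter.Below u w) :
    u = w ∨ weight u < weight w := by
  induction h with
  | @nil w =>
    rcases w with _ | ⟨x, w⟩
    · exact .inl rfl
    · exact .inr (by simp only [weight]; have := Letter.one_le_weight x; omega)
  | cons hxy _ ih =>
    rcases hxy.eq_or_weight_lt with rfl | hxy <;> rcases ih with rfl | ih
    · exact .inl rfl
    all_goals exact .inr (by simp only [weight]; omega)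
  | @cons_right x _ _ _ ih =>
    have := Letter.one_le_weight x
    exact .inr (by rcases ih with rfl | ih <;> simp only [weight] <;> omega)

theorem weight_lt {u w : List (Letter s)} (h : WLE u w) (hne : u ≠ w) : weight u < weight w :=
  (eq_or_weight_lt (iff_sublistForall₂.1 h)).resolve_left hne

def Iic : List (Letter s) → Finset (List (Letter s))
  | [] => {[]}
  | x :: v => ((Letter.Iic x ×ˢ Iic v).image fun p => p.1 :: p.2) ∪
      (Iic v).filter fun z => ∀ y ∈ z.head?, ¬ Letter.Below y x

theorem mem_Iic {z v : List (Letter s)} : z ∈ Iic v ↔ WLE z v := by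
  rw [iff_sublistForall₂]
  induction v generalizing z with
  | nil =>
    refine ⟨fun h => ?_, fun h => ?_⟩
    · rw [Finset.mem_singleton.1 h]
      exact .nil
    · cases h
      exact Finset.mem_singleton_self _
  | cons x v ih =>
    simp only [Iic, Finset.mem_union, Finset.mem_image, Finset.mem_product, Finset.mem_filter,
      Letter.mem_Iic, ih]
    constructor
    · rintro (⟨⟨y, z⟩, ⟨hy, hz⟩, rfl⟩ | ⟨hz, -⟩)
      · exact .cons hy hz
      · exact .cons_right hz
    · intro h
      cases h with
      | nil => exact .inr ⟨.nil, by simp⟩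
      | cons hy hz => exact .inl ⟨(_, _), ⟨hy, hz⟩, rfl⟩
      | cons_right hz =>
        rcases z with _ | ⟨y, z⟩
        · exact .inr ⟨hz, by simp⟩
        by_cases hy : Letter.Below y x
        · exact .inl ⟨(y, z), ⟨hy, hz.of_cons_left⟩, rfl⟩
        · exact .inr ⟨hz, by simpa using hy⟩

def mobiusNil (s : ℕ) : List (Letter s) → ℤ
  | [] => 1
  | y :: w => Letter.mobiusCoeff y w.head? * mobiusNil s w

theorem sum_Iic_mobiusNil (v : List (Letter s)) :
    ∑ z ∈ Iic v, mobiusNil s z = if v = [] then 1 else 0 := by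
  rcases v with _ | ⟨x, v⟩
  · simp [Iic, mobiusNil]
  have hdisj : Disjoint ((Letter.Iic x ×ˢ Iic v).image fun p => p.1 :: p.2)
      ((Iic v).filter fun z => ∀ y ∈ z.head?, ¬ Letter.Below y x) := by
    simp only [Finset.disjoint_left, Finset.mem_image, Finset.mem_product, Finset.mem_filter,
      Letter.mem_Iic]
    rintro _ ⟨⟨y, z⟩, ⟨hy, -⟩, rfl⟩ ⟨-, hz⟩
    exact hz y rfl hy
  have hinj : Set.InjOn (fun p : Letter s × List (Letter s) => p.1 :: p.2)
      ↑(Letter.Iic x ×ˢ Iic v) :=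
    fun p _ q _ h => Prod.ext (List.cons.inj h).1 (List.cons.inj h).2
  rw [if_neg (List.cons_ne_nil _ _), Iic, Finset.sum_union hdisj, Finset.sum_image hinj,
    Finset.sum_product, Finset.sum_filter, Finset.sum_comm, ← Finset.sum_add_distrib]
  refine Finset.sum_eq_zero fun z _ => ?_
  calc ∑ y ∈ Letter.Iic x, mobiusNil s (y :: z)
        + (if ∀ y ∈ z.head?, ¬ Letter.Below y x then mobiusNil s z else 0)
      = (∑ y ∈ Letter.Iic x, Letter.mobiusCoeff y z.head?
        + if ∀ y ∈ z.head?, ¬ Letter.Below y x then 1 else 0) * mobiusNil s z := by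
        simp only [mobiusNil, add_mul, Finset.sum_mul, ite_mul, one_mul, zero_mul]
    _ = 0 := by rw [Letter.sum_mobiusCoeff_add, zero_mul]

theorem mobiusNil_replicate_none (n : ℕ) :
    mobiusNil s (List.replicate (n + 1) none) = (s : ℤ) ^ n * (s - 1) := by
  induction n with
  | zero => simp [mobiusNil, Letter.mobiusCoeff]
  | succ n ih =>
    rw [List.replicate_succ, mobiusNil, ih, List.head?_replicate]
    simp [Letter.mobiusCoeff, pow_succ]
    ring

theorem sum_Iic_of_isMobius {μ : List (Letter s) → List (Letter s) → ℤ} (hrefl : ∀ u, μ u u = 1)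
    (hsum : ∀ u v, WLE u v → u ≠ v → ∑ᶠ z ∈ {z : List (Letter s) | WLE u z ∧ WLE z v}, μ u z = 0)
    (v : List (Letter s)) : ∑ z ∈ Iic v, μ [] z = if v = [] then 1 else 0 := by
  rcases eq_or_ne v [] with rfl | hv
  · simp [Iic, hrefl]
  have hIic : {z | WLE [] z ∧ WLE z v} = (Iic v : Set (List (Letter s))) := by
    ext z
    simp [mem_Iic, nil_left]
  rw [if_neg hv, ← finsum_mem_coe_finset, ← hIic]
  exact hsum [] v (nil_left v) hv.symm

end WLE

theorem mu_empty_c_pow_general (s : ℕ)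
    (μ : List (Letter s) → List (Letter s) → ℤ)
    (hrefl : ∀ u, μ u u = 1)
    (hsum : ∀ u v, WLE u v → u ≠ v → ∑ᶠ z ∈ {z : List (Letter s) | WLE u z ∧ WLE z v}, μ u z = 0)
    (n : ℕ) (hn : 1 ≤ n) :
    μ [] (List.replicate n (none : Letter s)) = (s : ℤ) ^ (n - 1) * ((s : ℤ) - 1) := by
  have hμ : μ [] = WLE.mobiusNil s :=
    eq_of_forall_sum_lowerSet_eq WLE.Iic WLE.weight (fun v => WLE.mem_Iic.2 (WLE.refl v))
      (fun _ _ hz hne => WLE.weight_lt (WLE.mem_Iic.1 hz) hne)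
      fun v => by rw [WLE.sum_Iic_of_isMobius hrefl hsum, WLE.sum_Iic_mobiusNil]
  obtain ⟨m, rfl⟩ := Nat.exists_eq_add_of_le' hn
  rw [hμ, WLE.mobiusNil_replicate_none, Nat.add_sub_cancel]

/-- For `n ≥ 1`: `μ(∅, c^n) = s^{n−1}(s−1)`. -/
theorem mu_empty_c_pow (s : ℕ) (hs : 1 ≤ s)
    (μ : List (Letter s) → List (Letter s) → ℤ)
    (hrefl : ∀ u, μ u u = 1)
    (hnle : ∀ u v, ¬ WLE u v → μ u v = 0)
    (hsum : ∀ u v, WLE u v → u ≠ v → ∑ᶠ z ∈ {z : List (Letter s) | WLE u z ∧ WLE z v}, μ u z = 0)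
    (n : ℕ) (hn : 1 ≤ n) :
    μ [] (List.replicate n (none : Letter s)) = (s : ℤ) ^ (n - 1) * ((s : ℤ) - 1) :=
  mu_empty_c_pow_general s μ hrefl hsum n hn
end

section
/- Fix s ≥ 1, P_s = {a_1,…,a_s, c | a_i < c}, with μ the Möbius function of P_s^*, and let T^s_k(X) be defined by T^s_0 = 1, T^s_1 = (s−1)X, T^s_{k+2} + T^s_k = sX·T^s_{k+1}. Then for all 0 ≤ m ≤ n, μ(a_1^m, c^n) equals the coefficient of X^{n−m} in T^s_{m+n}(X). In particular, for s = 2 (the poset {a, b, c | a < c, b < c}), μ(a^i, c^j) is the coefficient of X^{j−i} in the Chebyshev polynomial of the first kind T_{i+j}(X), resolving the Björner–Sagan–Vatter conjecture. -/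
open Polynomial

/-- Generalized Chebyshev polynomials over ℤ. -/
noncomputable def genCheb (s : ℕ) : ℕ → Polynomial ℤ
  | 0 => 1
  | 1 => Polynomial.C ((s : ℤ) - 1) * Polynomial.X
  | (k + 2) => Polynomial.C (s : ℤ) * Polynomial.X * genCheb s (k + 1) - genCheb s k

/-!
For a fixed letter `a`, the generating polynomial `∑ₘ μ(aᵐ, w) Xᵐ` is a product over the
positions of `w` of weights depending only on the letter at that position and on the next one.
Since the down-sets of the generalized subword order are finite, the recursion
`∑_{u ≤ z ≤ w} μ(u, z) = δ_{u w}` determines `μ`, so it suffices to check it for these products.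
Splitting the words below `x :: w` according to whether their first letter embeds into `x`, the
sum over them factors as `(X if x = a else 0)` times the sum for `w`, by an identity between the
weights of single letters. For `w = cⁿ` the product is `(s - 1 - X) (s - X)ⁿ⁻¹`, whose
coefficients obey the same recurrence as the relevant coefficients of `T^s_{m+n}`.
-/

open Finset

theorem List.SublistForall₂.antisymm {α : Type*} {R : α → α → Prop} [Std.Antisymm R]
    {l₁ l₂ : List α} (h₁ : SublistForall₂ R l₁ l₂) (h₂ : SublistForall₂ R l₂ l₁) : l₁ = l₂ := by
  obtain ⟨l, hl, hsub⟩ := sublistForall₂_iff.1 h₁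
  obtain ⟨l', hl', hsub'⟩ := sublistForall₂_iff.1 h₂
  have hlen : l₁.length = l₂.length :=
    le_antisymm (hl.length_eq ▸ hsub.length_le) (hl'.length_eq ▸ hsub'.length_le)
  rw [hsub.eq_of_length (hl.length_eq ▸ hlen)] at hl
  rw [hsub'.eq_of_length (hl'.length_eq ▸ hlen.symm)] at hl'
  have heq : Forall₂ (· = ·) l₁ l₂ := hl.mp (fun _ _ hab hba => _root_.antisymm hab hba) hl'.flip
  rwa [forall₂_eq_eq_eq] at heq

section LocallyFinitePartialOrder

variable {α : Type*} {r : α → α → Prop} [IsPartialOrder α r] {down : α → Finset α}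

theorem card_down_lt_card_down (hdown : ∀ z w, z ∈ down w ↔ r z w) {z w : α} (hzw : r z w)
    (hne : z ≠ w) : #(down z) < #(down w) := by
  refine card_lt_card ((ssubset_iff_of_subset fun y hy => ?_).2 ⟨w, ?_, fun hw => hne ?_⟩)
  · exact (hdown _ _).2 (_root_.trans ((hdown _ _).1 hy) hzw)
  · exact (hdown _ _).2 (refl w)
  · exact _root_.antisymm hzw ((hdown _ _).1 hw)

theorem eq_of_forall_sum_down_eq {M : Type*} [AddCancelCommMonoid M]
    (hdown : ∀ z w, z ∈ down w ↔ r z w) {f g : α → M}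
    (h : ∀ w, ∑ z ∈ down w, f z = ∑ z ∈ down w, g z) : f = g := by
  classical
  funext w
  induction hn : #(down w) using Nat.strong_induction_on generalizing w with
  | _ n ih =>
  have hw : w ∈ down w := (hdown w w).2 (refl w)
  have hbelow : ∑ z ∈ (down w).erase w, f z = ∑ z ∈ (down w).erase w, g z := by
    refine sum_congr rfl fun z hz => ih _ ?_ z rfl
    exact hn ▸ card_down_lt_card_down hdown ((hdown z w).1 (mem_of_mem_erase hz))
      (ne_of_mem_erase hz)
  have hsum := h w
  rw [← add_sum_erase _ _ hw, ← add_sum_erase _ _ hw, hbelow] at hsum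
  exact add_right_cancel hsum

theorem sum_down_eq_ite_of_moebius {R : Type*} [AddCommMonoidWithOne R] [DecidableEq α]
    (hdown : ∀ z w, z ∈ down w ↔ r z w) {μ : α → α → R} (hrefl : ∀ u, μ u u = 1)
    (hnle : ∀ u v, ¬ r u v → μ u v = 0)
    (hsum : ∀ u v, r u v → u ≠ v → ∑ᶠ z ∈ {z | r u z ∧ r z v}, μ u z = 0) (u w : α) :
    ∑ z ∈ down w, μ u z = if w = u then 1 else 0 := by
  classical
  by_cases huw : r u w
  · by_cases hwu : w = u
    · subst hwu
      rw [if_pos rfl, sum_eq_single_of_mem w ((hdown w w).2 (refl w)), hrefl]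
      intro z hz hzw
      exact hnle _ _ fun hwz => hzw (_root_.antisymm ((hdown z w).1 hz) hwz)
    · have hset : {z | r u z ∧ r z w} = ↑((down w).filter (r u)) := by
        ext z
        simp [hdown, and_comm]
      rw [if_neg hwu, ← hsum u w huw (Ne.symm hwu), hset, finsum_mem_coe_finset,
        sum_filter_of_ne]
      intro z _ hz
      by_contra huz
      exact hz (hnle u z huz)
  · rw [if_neg fun h : w = u => huw (h ▸ refl (r := r) u)]
    refine sum_eq_zero fun z hz => hnle u z fun huz => huw ?_
    exact _root_.trans huz ((hdown z w).1 hz)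

end LocallyFinitePartialOrder

def LetterLE {s : ℕ} (x y : Letter s) : Prop := x = y ∨ y = none

instance {s : ℕ} : DecidableRel (LetterLE (s := s)) :=
  fun x y => inferInstanceAs (Decidable (x = y ∨ y = none))

instance {s : ℕ} : IsPartialOrder (Letter s) LetterLE where
  refl _ := Or.inl rfl
  trans _ _ _ := by unfold LetterLE; grind
  antisymm _ _ := by unfold LetterLE; grind

section Words

variable {s : ℕ}

theorem wle_iff_sublistForall₂ {u w : List (Letter s)} :
    WLE u w ↔ List.SublistForall₂ LetterLE u w := by
  rw [List.sublistForall₂_iff, WLE]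
  exact exists_congr fun _ => and_comm

instance : IsPartialOrder (List (Letter s)) WLE where
  refl w := wle_iff_sublistForall₂.2 (refl w)
  trans _ _ _ h₁ h₂ := wle_iff_sublistForall₂.2 <|
    _root_.trans (wle_iff_sublistForall₂.1 h₁) (wle_iff_sublistForall₂.1 h₂)
  antisymm _ _ h₁ h₂ := (wle_iff_sublistForall₂.1 h₁).antisymm (wle_iff_sublistForall₂.1 h₂)

def wordsBelow : List (Letter s) → Finset (List (Letter s))
  | [] => {[]}
  | x :: w => ((univ.filter (LetterLE · x)) ×ˢ wordsBelow w).image (fun p => p.1 :: p.2) ∪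
      wordsBelow w

theorem mem_wordsBelow {z w : List (Letter s)} : z ∈ wordsBelow w ↔ WLE z w := by
  rw [wle_iff_sublistForall₂]
  induction w generalizing z with
  | nil =>
    simp only [wordsBelow, mem_singleton]
    exact ⟨by rintro rfl; exact .nil, fun h => by cases h; rfl⟩
  | cons x w ih =>
    simp only [wordsBelow, mem_union, mem_image, mem_product, mem_filter, mem_univ, true_and,
      Prod.exists, ih]
    constructor
    · rintro (⟨y, z', ⟨hyx, hz'⟩, rfl⟩ | hz)
      · exact .cons hyx hz'
      · exact .cons_right hz
    · rintro (_ | ⟨hyx, hz'⟩ | hz)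
      · exact Or.inr .nil
      · exact Or.inl ⟨_, _, ⟨hyx, hz'⟩, rfl⟩
      · exact Or.inr hz

theorem wordsBelow_cons (x : Letter s) (w : List (Letter s)) :
    wordsBelow (x :: w) = ((univ.filter (LetterLE · x)) ×ˢ wordsBelow w).image
      (fun p => p.1 :: p.2) ∪ (wordsBelow w).filter (fun z => ¬ ∃ y ∈ z.head?, LetterLE y x) := by
  refine Finset.ext fun z => ⟨fun hz => ?_, fun hz => ?_⟩
  · rcases mem_union.1 hz with hA | hB
    · exact mem_union_left _ hA
    by_cases hhead : ∃ y ∈ z.head?, LetterLE y x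
    · obtain ⟨y, hy, hyx⟩ := hhead
      obtain ⟨z', rfl⟩ : ∃ z', z = y :: z' := ⟨z.tail, (List.cons_head?_tail hy).symm⟩
      have hz' : WLE z' w := _root_.trans (wle_iff_sublistForall₂.2
        (List.tail_sublistForall₂_self (y :: z'))) (mem_wordsBelow.1 hB)
      exact mem_union_left _ (mem_image.2 ⟨(y, z'), by simp [hyx, mem_wordsBelow.2 hz'], rfl⟩)
    · exact mem_union_right _ (mem_filter.2 ⟨hB, hhead⟩)
  · rcases mem_union.1 hz with hA | hB
    · exact mem_union_left _ hA
    · exact mem_union_right _ (mem_filter.1 hB).1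

theorem sum_wordsBelow_cons {M : Type*} [AddCommMonoid M] (f : List (Letter s) → M)
    (x : Letter s) (w : List (Letter s)) :
    ∑ z ∈ wordsBelow (x :: w), f z = ∑ z ∈ wordsBelow w,
      (∑ y ∈ univ.filter (LetterLE · x), f (y :: z) +
        if ∃ y ∈ z.head?, LetterLE y x then 0 else f z) := by
  have hdisj : Disjoint (((univ.filter (LetterLE · x)) ×ˢ wordsBelow w).image
      (fun p => p.1 :: p.2)) ((wordsBelow w).filter (fun z => ¬ ∃ y ∈ z.head?, LetterLE y x)) := by
    refine disjoint_left.2 fun z hA hB => (mem_filter.1 hB).2 ?_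
    obtain ⟨⟨y, z'⟩, hp, rfl⟩ := mem_image.1 hA
    exact ⟨y, rfl, (mem_filter.1 (mem_product.1 hp).1).2⟩
  have hinj : Set.InjOn (fun p : Letter s × List (Letter s) => p.1 :: p.2) ↑(univ.filter
      (LetterLE · x) ×ˢ wordsBelow w) := fun p _ q _ h => Prod.ext_iff.2 (List.cons_eq_cons.1 h)
  rw [wordsBelow_cons, sum_union hdisj, sum_image hinj, sum_product_right, sum_filter,
    ← sum_add_distrib]
  simp only [ite_not]

end Words

section MoebiusPoly

variable {s : ℕ}

/-- `t` is the letter that follows `y`, or `none` at the end of the word. -/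
noncomputable def moebiusWeight (a : Fin s) (y : Letter s) (t : Option (Letter s)) : ℤ[X] :=
  (if y = some a then X else 0) + (if y = none then C (s : ℤ) - X else 0) +
    (if t = some y then 1 else 0) - 1

noncomputable def moebiusPoly (a : Fin s) : List (Letter s) → ℤ[X]
  | [] => 1
  | y :: z => moebiusWeight a y z.head? * moebiusPoly a z

theorem sum_moebiusWeight_add_ite (a : Fin s) (x : Letter s) (t : Option (Letter s)) :
    ∑ y ∈ univ.filter (LetterLE · x), moebiusWeight a y t +
        (if ∃ y ∈ t, LetterLE y x then 0 else 1) = if x = some a then X else 0 := by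
  cases x with
  | none =>
    have hall : univ.filter (LetterLE · (none : Letter s)) = univ :=
      filter_true_of_mem fun y _ => Or.inr rfl
    rw [hall]
    simp only [moebiusWeight, sum_add_distrib, sum_sub_distrib, Fintype.sum_ite_eq']
    cases t <;> simp [LetterLE, Fintype.card_option]
  | some j =>
    have hle : univ.filter (LetterLE · (some j : Letter s)) = {some j} := by
      ext y; simp [LetterLE]
    rw [hle, sum_singleton]
    simp only [moebiusWeight, LetterLE]
    by_cases ht : t = some (some j) <;> simp [ht]

theorem sum_wordsBelow_moebiusPoly (a : Fin s) (w : List (Letter s)) :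
    ∑ z ∈ wordsBelow w, moebiusPoly a z = if ∀ y ∈ w, y = some a then X ^ w.length else 0 := by
  induction w with
  | nil => simp [wordsBelow, moebiusPoly]
  | cons x w ih =>
    have hstep : ∀ z, ∑ y ∈ univ.filter (LetterLE · x), moebiusPoly a (y :: z) +
        (if ∃ y ∈ z.head?, LetterLE y x then 0 else moebiusPoly a z) =
        (if x = some a then X else 0) * moebiusPoly a z := fun z => by
      simp only [moebiusPoly]
      rw [← sum_moebiusWeight_add_ite a x z.head?, add_mul, sum_mul, ite_mul, zero_mul, one_mul]
    rw [sum_wordsBelow_cons, sum_congr rfl fun z _ => hstep z, ← mul_sum, ih]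
    by_cases hx : x = some a <;> simp [hx, pow_succ']

theorem sum_wordsBelow_coeff_moebiusPoly (a : Fin s) (m : ℕ) (w : List (Letter s)) :
    ∑ z ∈ wordsBelow w, (moebiusPoly a z).coeff m =
      if w = List.replicate m (some a) then 1 else 0 := by
  rw [← finsetSum_coeff, sum_wordsBelow_moebiusPoly]
  simp only [List.eq_replicate_iff]
  by_cases hw : ∀ y ∈ w, y = some a
  · rw [if_pos hw, coeff_X_pow]
    exact if_congr ⟨fun h => ⟨h.symm, hw⟩, fun h => h.1.symm⟩ rfl rfl
  · rw [if_neg hw]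
    simp [hw]

theorem moebius_replicate_eq_coeff_moebiusPoly (μ : List (Letter s) → List (Letter s) → ℤ)
    (hrefl : ∀ u, μ u u = 1) (hnle : ∀ u v, ¬ WLE u v → μ u v = 0)
    (hsum : ∀ u v, WLE u v → u ≠ v → ∑ᶠ z ∈ {z | WLE u z ∧ WLE z v}, μ u z = 0)
    (a : Fin s) (m : ℕ) (w : List (Letter s)) :
    μ (List.replicate m (some a)) w = (moebiusPoly a w).coeff m := by
  have hdown : ∀ z w : List (Letter s), z ∈ wordsBelow w ↔ WLE z w := fun _ _ => mem_wordsBelow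
  suffices h : μ (List.replicate m (some a)) = fun w => (moebiusPoly a w).coeff m from
    congrFun h w
  refine eq_of_forall_sum_down_eq hdown fun w => ?_
  rw [sum_down_eq_ite_of_moebius hdown hrefl hnle hsum,
    sum_wordsBelow_coeff_moebiusPoly]

end MoebiusPoly

section Chebyshev

theorem natDegree_genCheb_le (s : ℕ) : ∀ k, (genCheb s k).natDegree ≤ k
  | 0 => by simp [genCheb]
  | 1 => by simp only [genCheb]; compute_degree
  | k + 2 => by
    rw [genCheb]
    refine (natDegree_sub_le _ _).trans (max_le ?_ ((natDegree_genCheb_le s k).trans (by omega)))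
    rw [show k + 2 = 1 + (k + 1) by omega]
    exact natDegree_mul_le_of_le (by compute_degree) (natDegree_genCheb_le s (k + 1))

theorem coeff_genCheb_add_two_succ (s k d : ℕ) :
    (genCheb s (k + 2)).coeff (d + 1) =
      s * (genCheb s (k + 1)).coeff d - (genCheb s k).coeff (d + 1) := by
  rw [genCheb, coeff_sub, mul_assoc, coeff_C_mul, coeff_X_mul]

theorem coeff_genCheb_add_two_zero (s k : ℕ) :
    (genCheb s (k + 2)).coeff 0 = -(genCheb s k).coeff 0 := by
  rw [genCheb, coeff_sub, mul_assoc, coeff_C_mul, coeff_X_mul_zero, mul_zero, zero_sub]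

variable {s : ℕ}

theorem moebiusPoly_singleton_none (a : Fin s) :
    moebiusPoly a [none] = C (s : ℤ) - X - 1 := by
  simp [moebiusPoly, moebiusWeight]

theorem moebiusPoly_replicate_none_add_two (a : Fin s) (n : ℕ) :
    moebiusPoly a (List.replicate (n + 2) none) =
      (C (s : ℤ) - X) * moebiusPoly a (List.replicate (n + 1) none) := by
  simp [moebiusPoly, moebiusWeight, List.replicate_succ]

theorem natDegree_moebiusPoly_le (a : Fin s) (w : List (Letter s)) :
    (moebiusPoly a w).natDegree ≤ w.length := by
  induction w with
  | nil => simp [moebiusPoly]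
  | cons y z ih =>
    rw [moebiusPoly, List.length_cons, add_comm]
    refine natDegree_mul_le_of_le ?_ ih
    unfold moebiusWeight
    split_ifs <;> compute_degree!

theorem coeff_moebiusPoly_replicate_none (a : Fin s) :
    ∀ n m, m ≤ n → (moebiusPoly a (List.replicate n none)).coeff m =
      (genCheb s (m + n)).coeff (n - m)
  | 0, m, hm => by
    obtain rfl : m = 0 := by omega
    simp [moebiusPoly, genCheb]
  | 1, m, hm => by
    rw [List.replicate_one, moebiusPoly_singleton_none]
    interval_cases m
    · simp [genCheb]
    · simp [genCheb, coeff_one]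
  | n + 2, 0, _ => by
    rw [moebiusPoly_replicate_none_add_two, sub_mul, coeff_sub, coeff_C_mul, coeff_X_mul_zero,
      sub_zero, coeff_moebiusPoly_replicate_none a (n + 1) 0 (by omega), zero_add, zero_add,
      Nat.sub_zero, Nat.sub_zero, coeff_genCheb_add_two_succ,
      coeff_eq_zero_of_natDegree_lt ((natDegree_genCheb_le s n).trans_lt (by omega)), sub_zero]
  | n + 2, m + 1, hm => by
    rw [moebiusPoly_replicate_none_add_two, sub_mul, coeff_sub, coeff_C_mul, coeff_X_mul]
    rcases Nat.lt_or_ge n m with hnm | hmn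
    · obtain rfl : m = n + 1 := by omega
      rw [coeff_eq_zero_of_natDegree_lt ((natDegree_moebiusPoly_le a _).trans_lt (by simp)),
        coeff_moebiusPoly_replicate_none a (n + 1) (n + 1) le_rfl, Nat.sub_self, Nat.sub_self,
        show n + 1 + 1 + (n + 2) = n + 1 + (n + 1) + 2 by omega, coeff_genCheb_add_two_zero]
      ring
    · rw [coeff_moebiusPoly_replicate_none a (n + 1) (m + 1) (by omega),
        coeff_moebiusPoly_replicate_none a (n + 1) m (by omega),
        show m + 1 + (n + 2) = m + (n + 1) + 2 by omega, show n + 2 - (m + 1) = n - m + 1 by omega,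
        coeff_genCheb_add_two_succ, show m + (n + 1) + 1 = m + 1 + (n + 1) by omega,
        show n + 1 - m = n - m + 1 by omega, show n + 1 - (m + 1) = n - m by omega]

end Chebyshev

/-- Main theorem (generalizing the Björner–Sagan–Vatter conjecture): for `0 ≤ m ≤ n`,
`μ(a_1^m, c^n)` is the coefficient of `X^{n−m}` in the generalized Chebyshev polynomial
`T^s_{m+n}`. For `s = 2` this is the conjecture about Chebyshev polynomials of the
first kind. -/
theorem mu_eq_genCheb_coeff (s : ℕ) (hs : 1 ≤ s)
    (μ : List (Letter s) → List (Letter s) → ℤ)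
    (hrefl : ∀ u, μ u u = 1)
    (hnle : ∀ u v, ¬ WLE u v → μ u v = 0)
    (hsum : ∀ u v, WLE u v → u ≠ v → ∑ᶠ z ∈ {z : List (Letter s) | WLE u z ∧ WLE z v}, μ u z = 0)
    (m n : ℕ) (hmn : m ≤ n) :
    μ (List.replicate m (some (⟨0, hs⟩ : Fin s) : Letter s)) (List.replicate n (none : Letter s))
      = (genCheb s (m + n)).coeff (n - m) := by
  rw [moebius_replicate_eq_coeff_moebiusPoly μ hrefl hnle hsum]
  exact coeff_moebiusPoly_replicate_none _ n m hmn
end
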